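/- arXiv:1409.1436 — 2 statements merged into one kernel-verified Lean document; each statement's English description precedes it below -/
import Mathlib

section
/- (Proposition 3, part 2.) Consider the dynamics with cost c satisfying 0 ≤ c < c_0 = 2/n + (1−2/n)·max_i ρ^i_0 − min_i ρ^i_0. Let t̄ be the least period with c_{t̄} ≤ c and suppose t̄ ≤ n−1. Assume that for every t ≤ t̄ the least and most accurate agents are unique, that l_t ≠ h_0 for t < min(t̄, n−1), and that for every t < t̄, P^{h_t}_t(l_t,k) ≠ G_t(l_t,k) for some k ∉ {l_t,h_t}. Then exactly one link is added at each period t = 0, 1, …, t̄−1 and no link is ever added at any period s ≥ t̄; hence G_s = G_{t̄} for all s ≥ t̄ and the steady-state network has exactly t̄ links. -/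
/-! While `c < c_t`, the least accurate agent `l_t` is not yet linked to anyone, so it links to
`h_t` and copies `h_t`'s perception of the pairs not involving itself. It is right about all its
own links, whereas `h_t` misperceives one of them, so `l_t` becomes the most accurate agent,
`h_{t+1} = l_t`, and the links added form the path `h_0 - l_0 - l_1 - ⋯`.

Every earlier updater `l_s` with `s + 2 ≤ t` holds `h_0`'s initial view of the pairs formed later, so
its accuracy moves in step with that of `h_0` and never falls below it. Hence the least accurate
agent is always a new one, and as it is not `h_0` it has no link yet.

At `t̄` the threshold is reached. If `l_t̄` and `h_t̄` are unlinked, nothing changes any more.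
Otherwise `t̄ = 1`, `l_1 = h_0` and `h_1 = l_0`; after one more perception update the state is fixed
from period 2 on. -/

open Finset

/-- Accuracy of perception `P` with respect to network `G` on `n` agents. -/
noncomputable def acc (n : ℕ) (G P : Fin n → Fin n → Bool) : ℝ :=
  (((Finset.univ : Finset (Fin n × Fin n)).filter fun pr =>
      pr.1 < pr.2 ∧ P pr.1 pr.2 = G pr.1 pr.2).card : ℝ) / ((n : ℝ) * ((n : ℝ) - 1) / 2)

/-- The coevolution dynamics of a network and perceptions, with linking cost `c`.
`G t` is the network at period `t`, `P t i` is agent `i`'s perception at period `t`,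
`l t` is the chosen least accurate agent and `h t` the chosen most accurate agent. -/
structure Dyn (n : ℕ) (c : ℝ) where
  G : ℕ → Fin n → Fin n → Bool
  P : ℕ → Fin n → Fin n → Fin n → Bool
  l : ℕ → Fin n
  h : ℕ → Fin n
  G_symm : ∀ t j k, G t j k = G t k j
  G_irrefl : ∀ t i, G t i i = false
  P_symm : ∀ t i j k, P t i j k = P t i k j
  P_irrefl : ∀ t i j, P t i j j = false
  G_init : ∀ j k, G 0 j k = false
  own_correct : ∀ t i k, P t i i k = G t i k
  l_min : ∀ t i, acc n (G t) (P t (l t)) ≤ acc n (G t) (P t i)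
  h_max : ∀ t i, acc n (G t) (P t i) ≤ acc n (G t) (P t (h t))
  h_pref : ∀ t, (∃ i, G t (l t) i = true ∧
      ∀ j, acc n (G t) (P t j) ≤ acc n (G t) (P t i)) → G t (l t) (h t) = true
  step_old : ∀ t, G t (l t) (h t) = true →
      (G (t + 1) = G t ∧
        ∀ j k, j ≠ l t → k ≠ l t → P (t + 1) (l t) j k = P t (h t) j k)
  step_add : ∀ t, G t (l t) (h t) = false →
      c < 2 / (n : ℝ) + (1 - 2 / (n : ℝ)) * acc n (G t) (P t (h t))
          - acc n (G t) (P t (l t)) →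
      ((∀ j k, G (t + 1) j k = true ↔
          (G t j k = true ∨ (j = l t ∧ k = h t) ∨ (j = h t ∧ k = l t))) ∧
        ∀ j k, j ≠ l t → k ≠ l t → P (t + 1) (l t) j k = P t (h t) j k)
  step_none : ∀ t, G t (l t) (h t) = false →
      ¬ (c < 2 / (n : ℝ) + (1 - 2 / (n : ℝ)) * acc n (G t) (P t (h t))
          - acc n (G t) (P t (l t))) →
      (G (t + 1) = G t ∧ ∀ i, P (t + 1) i = P t i)
  keep : ∀ t i, i ≠ l t → ∀ j k, j ≠ i → k ≠ i → P (t + 1) i j k = P t i j k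

namespace Dyn

variable {n : ℕ} {c : ℝ}

/-- Accuracy of agent `i` at period `t`. -/
noncomputable def rho (D : Dyn n c) (t : ℕ) (i : Fin n) : ℝ :=
  acc n (D.G t) (D.P t i)

/-- The threshold cost `c_t = 2/n + (1 − 2/n)·ρ^{h_t}_t − ρ^{l_t}_t`. -/
noncomputable def thr (D : Dyn n c) (t : ℕ) : ℝ :=
  2 / (n : ℝ) + (1 - 2 / (n : ℝ)) * D.rho t (D.h t) - D.rho t (D.l t)

/-- Number of links in a network. -/
def numLinks (G : Fin n → Fin n → Bool) : ℕ :=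
  ((Finset.univ : Finset (Fin n × Fin n)).filter fun pr =>
    pr.1 < pr.2 ∧ G pr.1 pr.2 = true).card

end Dyn

section Agreements

variable {n : ℕ}

def agreements (G P : Fin n → Fin n → Bool) : ℕ :=
  ((Finset.univ : Finset (Fin n × Fin n)).filter fun pr =>
    pr.1 < pr.2 ∧ P pr.1 pr.2 = G pr.1 pr.2).card

lemma acc_le_acc_iff (hn : 2 ≤ n) {G P G' Q : Fin n → Fin n → Bool} :
    acc n G P ≤ acc n G' Q ↔ agreements G P ≤ agreements G' Q := by
  have hM : (0 : ℝ) < n * (n - 1) / 2 := by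
    have : (2 : ℝ) ≤ n := by exact_mod_cast hn
    nlinarith
  exact (div_le_div_iff_of_pos_right hM).trans Nat.cast_le

lemma acc_lt_acc_iff (hn : 2 ≤ n) {G P G' Q : Fin n → Fin n → Bool} :
    acc n G P < acc n G' Q ↔ agreements G P < agreements G' Q := by
  simpa only [not_le] using (acc_le_acc_iff hn (G := G') (P := Q) (G' := G) (Q := P)).not

lemma agreements_le_agreements {G P G' Q : Fin n → Fin n → Bool}
    (h : ∀ j k, j < k → P j k = G j k → Q j k = G' j k) :
    agreements G P ≤ agreements G' Q :=
  card_le_card fun pr hpr => by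
    simp only [mem_filter, mem_univ, true_and] at hpr ⊢
    exact ⟨hpr.1, h _ _ hpr.1 hpr.2⟩

lemma agreements_lt_agreements {G P G' Q : Fin n → Fin n → Bool}
    (h : ∀ j k, j < k → P j k = G j k → Q j k = G' j k) {j k : Fin n} (hjk : j < k)
    (hP : P j k ≠ G j k) (hQ : Q j k = G' j k) :
    agreements G P < agreements G' Q := by
  refine card_lt_card ((ssubset_iff_of_subset fun pr hpr => ?_).2 ⟨(j, k), ?_, ?_⟩)
  · simp only [mem_filter, mem_univ, true_and] at hpr ⊢
    exact ⟨hpr.1, h _ _ hpr.1 hpr.2⟩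
  · simp [hjk, hQ]
  · simp [hP]

lemma agreements_congr {G P G' Q : Fin n → Fin n → Bool}
    (h : ∀ j k, j < k → (P j k = G j k ↔ Q j k = G' j k)) :
    agreements G P = agreements G' Q :=
  le_antisymm (agreements_le_agreements fun j k hjk => (h j k hjk).1)
    (agreements_le_agreements fun j k hjk => (h j k hjk).2)

lemma agreements_of_eq_off_pair {G G' P : Fin n → Fin n → Bool} {a b : Fin n} (hab : a < b)
    (hG : G a b = false) (hG' : G' a b = true)
    (hoff : ∀ j k, j < k → (j, k) ≠ (a, b) → G' j k = G j k) :
    (agreements G' P : ℤ) = agreements G P + if P a b then 1 else -1 := by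
  have hrest : ∑ pr ∈ univ.erase (a, b),
      (if pr.1 < pr.2 ∧ P pr.1 pr.2 = G' pr.1 pr.2 then 1 else 0 : ℤ) =
      ∑ pr ∈ univ.erase (a, b), if pr.1 < pr.2 ∧ P pr.1 pr.2 = G pr.1 pr.2 then 1 else 0 := by
    refine sum_congr rfl fun pr hpr => ?_
    rcases lt_or_ge pr.1 pr.2 with hlt | hge
    · rw [hoff _ _ hlt (ne_of_mem_erase hpr)]
    · simp [not_lt.2 hge]
  simp only [agreements, card_filter]
  push_cast
  rw [← add_sum_erase _ _ (mem_univ (a, b)), ← add_sum_erase _ _ (mem_univ (a, b)), hrest]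
  cases P a b <;> simp [hab, hG, hG', add_comm]

lemma agreements_addLink {G G' P : Fin n → Fin n → Bool} {a b : Fin n} (hab : a ≠ b)
    (hGs : ∀ j k, G j k = G k j) (hPs : ∀ j k, P j k = P k j) (hG : G a b = false)
    (hG' : ∀ j k, G' j k = true ↔ G j k = true ∨ (j = a ∧ k = b) ∨ (j = b ∧ k = a)) :
    (agreements G' P : ℤ) = agreements G P + if P a b then 1 else -1 := by
  wlog hlt : a < b generalizing a b
  · rw [hPs]
    refine this hab.symm (by rwa [hGs]) (fun j k => ?_) (hab.lt_or_gt.resolve_left hlt)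
    rw [hG', or_comm (a := j = b ∧ k = a)]
  refine agreements_of_eq_off_pair hlt hG ((hG' a b).2 (by simp)) fun j k hjk hne =>
    Bool.eq_iff_iff.2 ?_
  rw [hG']
  have : ¬(j = b ∧ k = a) := by rintro ⟨rfl, rfl⟩; exact lt_asymm hjk hlt
  have : ¬(j = a ∧ k = b) := by rintro ⟨rfl, rfl⟩; exact hne rfl
  tauto

lemma Dyn.numLinks_eq_agreements (G : Fin n → Fin n → Bool) :
    Dyn.numLinks G = agreements G fun _ _ => true := by
  simp only [Dyn.numLinks, agreements, eq_comm]

end Agreements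

namespace Dyn

variable {n : ℕ} {c : ℝ} (D : Dyn n c)

def cnt (t : ℕ) (i : Fin n) : ℕ := agreements (D.G t) (D.P t i)

variable {D}

lemma rho_le_rho_iff (hn : 2 ≤ n) {t t' : ℕ} {i i' : Fin n} :
    D.rho t i ≤ D.rho t' i' ↔ D.cnt t i ≤ D.cnt t' i' :=
  acc_le_acc_iff hn

lemma rho_lt_rho_iff (hn : 2 ≤ n) {t t' : ℕ} {i i' : Fin n} :
    D.rho t i < D.rho t' i' ↔ D.cnt t i < D.cnt t' i' :=
  acc_lt_acc_iff hn

variable (D) in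
lemma cnt_l_le (hn : 2 ≤ n) (t : ℕ) (i : Fin n) : D.cnt t (D.l t) ≤ D.cnt t i :=
  (rho_le_rho_iff hn).1 (D.l_min t i)

variable (D) in
lemma cnt_le_h (hn : 2 ≤ n) (t : ℕ) (i : Fin n) : D.cnt t i ≤ D.cnt t (D.h t) :=
  (rho_le_rho_iff hn).1 (D.h_max t i)

lemma P_eq_G_of_mem {t : ℕ} {i j k : Fin n} (h : j = i ∨ k = i) : D.P t i j k = D.G t j k := by
  rcases h with rfl | rfl
  · exact D.own_correct t j k
  · rw [D.P_symm, D.own_correct, D.G_symm]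

lemma P_succ_of_ne_l {t : ℕ} {i : Fin n} (hi : i ≠ D.l t)
    (hG : ∀ k, D.G (t + 1) i k = D.G t i k) : D.P (t + 1) i = D.P t i := by
  funext j k
  by_cases hjk : j = i ∨ k = i
  · rw [P_eq_G_of_mem hjk, P_eq_G_of_mem hjk]
    rcases hjk with rfl | rfl
    · exact hG k
    · rw [D.G_symm, hG, D.G_symm]
  · exact D.keep t i hi j k (not_or.1 hjk).1 (not_or.1 hjk).2

lemma l_ne_h (hn : 2 ≤ n) {t : ℕ} (hl : ∀ i, i ≠ D.l t → D.rho t (D.l t) < D.rho t i) :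
    D.l t ≠ D.h t := by
  intro heq
  have : Nontrivial (Fin n) := Fin.nontrivial_iff_two_le.2 hn
  obtain ⟨i, hi⟩ := exists_ne (D.l t)
  have := D.h_max t i
  rw [← heq] at this
  exact (hl i hi).not_ge this

section AddStep

variable {t : ℕ}

lemma G_succ_of_add (hfalse : D.G t (D.l t) (D.h t) = false) (hthr : c < D.thr t)
    {j k : Fin n} (h₁ : ¬(j = D.l t ∧ k = D.h t)) (h₂ : ¬(j = D.h t ∧ k = D.l t)) :
    D.G (t + 1) j k = D.G t j k := by
  rw [Bool.eq_iff_iff, (D.step_add t hfalse hthr).1]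
  tauto

lemma cnt_succ_h_of_add (hlh : D.l t ≠ D.h t) (hfalse : D.G t (D.l t) (D.h t) = false)
    (hthr : c < D.thr t) : D.cnt (t + 1) (D.h t) = D.cnt t (D.h t) := by
  refine agreements_congr fun j k _ => ?_
  by_cases hjk : j = D.h t ∨ k = D.h t
  · exact iff_of_true (P_eq_G_of_mem hjk) (P_eq_G_of_mem hjk)
  · obtain ⟨hj, hk⟩ := not_or.1 hjk
    rw [D.keep t _ hlh.symm j k hj hk,
      G_succ_of_add hfalse hthr (fun h => hk h.2) (fun h => hj h.1)]

lemma cnt_succ_h_lt_cnt_succ_l (hlh : D.l t ≠ D.h t) (hfalse : D.G t (D.l t) (D.h t) = false)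
    (hthr : c < D.thr t)
    (hmis : ∃ k, k ≠ D.l t ∧ k ≠ D.h t ∧ D.P t (D.h t) (D.l t) k ≠ D.G t (D.l t) k) :
    D.cnt (t + 1) (D.h t) < D.cnt (t + 1) (D.l t) := by
  have hcopy := (D.step_add t hfalse hthr).2
  have himp : ∀ j k, j < k → D.P (t + 1) (D.h t) j k = D.G (t + 1) j k →
      D.P (t + 1) (D.l t) j k = D.G (t + 1) j k := by
    intro j k _ hagree
    by_cases hjk : j = D.l t ∨ k = D.l t
    · exact P_eq_G_of_mem hjk
    · obtain ⟨hj, hk⟩ := not_or.1 hjk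
      rw [hcopy j k hj hk, ← hagree]
      by_cases hjk' : j = D.h t ∨ k = D.h t
      · rw [P_eq_G_of_mem hjk', P_eq_G_of_mem hjk',
          G_succ_of_add hfalse hthr (fun h => hj h.1) (fun h => hk h.2)]
      · exact (D.keep t _ hlh.symm j k (not_or.1 hjk').1 (not_or.1 hjk').2).symm
  obtain ⟨k, hkl, hkh, hk⟩ := hmis
  have hne : D.P (t + 1) (D.h t) (D.l t) k ≠ D.G (t + 1) (D.l t) k := by
    rwa [D.keep t _ hlh.symm _ k hlh hkh,
      G_succ_of_add hfalse hthr (fun h => hkh h.2) (fun h => hlh h.1)]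
  rcases hkl.lt_or_gt with hlt | hgt
  · exact agreements_lt_agreements himp hlt (by rwa [D.P_symm, D.G_symm])
      (P_eq_G_of_mem (Or.inr rfl))
  · exact agreements_lt_agreements himp hgt hne (P_eq_G_of_mem (Or.inl rfl))

lemma cnt_succ_of_add_of_ne (hlh : D.l t ≠ D.h t) (hfalse : D.G t (D.l t) (D.h t) = false)
    (hthr : c < D.thr t) {i : Fin n} (hil : i ≠ D.l t) (hih : i ≠ D.h t) :
    (D.cnt (t + 1) i : ℤ) = D.cnt t i + if D.P t i (D.l t) (D.h t) then 1 else -1 := by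
  have hP : D.P (t + 1) i = D.P t i := P_succ_of_ne_l hil fun k =>
    G_succ_of_add hfalse hthr (fun h => hil h.1) (fun h => hih h.1)
  rw [cnt, cnt, hP]
  exact agreements_addLink hlh (D.G_symm t) (D.P_symm t i) hfalse (D.step_add t hfalse hthr).1

lemma cnt_succ_le_of_add_of_ne (hlh : D.l t ≠ D.h t) (hfalse : D.G t (D.l t) (D.h t) = false)
    (hthr : c < D.thr t) {i : Fin n} (hil : i ≠ D.l t) (hih : i ≠ D.h t) :
    D.cnt (t + 1) i ≤ D.cnt t i + 1 := by
  have := cnt_succ_of_add_of_ne hlh hfalse hthr hil hih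
  split_ifs at this <;> omega

lemma h_succ_of_add (hn : 2 ≤ n) (hlh : D.l t ≠ D.h t)
    (hfalse : D.G t (D.l t) (D.h t) = false) (hthr : c < D.thr t)
    (hmis : ∃ k, k ≠ D.l t ∧ k ≠ D.h t ∧ D.P t (D.h t) (D.l t) k ≠ D.G t (D.l t) k)
    (hh : ∀ i, i ≠ D.h (t + 1) → D.rho (t + 1) i < D.rho (t + 1) (D.h (t + 1))) :
    D.h (t + 1) = D.l t := by
  have hlt := cnt_succ_h_lt_cnt_succ_l hlh hfalse hthr hmis
  have hle : ∀ i, D.cnt (t + 1) i ≤ D.cnt (t + 1) (D.l t) := by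
    intro i
    by_cases hil : i = D.l t
    · rw [hil]
    by_cases hih : i = D.h t
    · rw [hih]; exact hlt.le
    have := cnt_succ_le_of_add_of_ne hlh hfalse hthr hil hih
    have := D.cnt_le_h hn t i
    have := cnt_succ_h_of_add hlh hfalse hthr
    omega
  by_contra hne
  exact ((rho_lt_rho_iff hn).1 (hh _ (Ne.symm hne))).not_ge (hle _)

lemma numLinks_succ_of_add (hlh : D.l t ≠ D.h t) (hfalse : D.G t (D.l t) (D.h t) = false)
    (hthr : c < D.thr t) : numLinks (D.G (t + 1)) = numLinks (D.G t) + 1 := by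
  have := agreements_addLink (P := fun _ _ => true) hlh (D.G_symm t) (fun _ _ => rfl) hfalse
    (D.step_add t hfalse hthr).1
  rw [numLinks_eq_agreements, numLinks_eq_agreements]
  simp only [if_true] at this
  omega

end AddStep

lemma G_eq_of_stable {s : ℕ} (hthr : D.thr s ≤ c)
    (hlink : ∀ i j, (∀ k, D.rho s i ≤ D.rho s k) → (∀ k, D.rho s k ≤ D.rho s j) →
      D.G s i j = false) :
    ∀ t, s ≤ t → D.G t = D.G s := by
  suffices h : ∀ k, D.G (s + k) = D.G s ∧ D.P (s + k) = D.P s by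
    intro t hst
    obtain ⟨k, rfl⟩ := Nat.exists_eq_add_of_le hst
    exact (h k).1
  intro k
  induction k with
  | zero => exact ⟨rfl, rfl⟩
  | succ k ih =>
    obtain ⟨hG, hP⟩ := ih
    have hrho : D.rho (s + k) = D.rho s := by
      funext i
      simp only [rho, hG, hP]
    have hmin : ∀ i, D.rho s (D.l (s + k)) ≤ D.rho s i := hrho ▸ D.l_min (s + k)
    have hmax : ∀ i, D.rho s i ≤ D.rho s (D.h (s + k)) := hrho ▸ D.h_max (s + k)
    have hl : D.rho s (D.l (s + k)) = D.rho s (D.l s) := le_antisymm (hmin _) (D.l_min s _)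
    have hh : D.rho s (D.h (s + k)) = D.rho s (D.h s) := le_antisymm (D.h_max s _) (hmax _)
    have hthr' : D.thr (s + k) ≤ c := by rwa [thr, hrho, hl, hh]
    have hnone := D.step_none (s + k) (hG ▸ hlink _ _ hmin hmax) hthr'.not_gt
    exact ⟨hnone.1.trans hG, (funext hnone.2).trans hP⟩

lemma thr_le_thr (hn : 2 ≤ n) {s s' : ℕ} (hh : D.cnt s' (D.h s') = D.cnt s (D.h s))
    (hl : D.cnt s (D.l s) ≤ D.cnt s' (D.l s')) : D.thr s' ≤ D.thr s := by
  have hh' : D.rho s' (D.h s') = D.rho s (D.h s) :=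
    le_antisymm ((rho_le_rho_iff hn).2 hh.le) ((rho_le_rho_iff hn).2 hh.ge)
  have hl' : D.rho s (D.l s) ≤ D.rho s' (D.l s') := (rho_le_rho_iff hn).2 hl
  rw [thr, thr, hh']
  linarith

lemma G_eq_of_unique {s : ℕ} (hthr : D.thr s ≤ c) (hfalse : D.G s (D.l s) (D.h s) = false)
    (hl : ∀ i, i ≠ D.l s → D.rho s (D.l s) < D.rho s i)
    (hh : ∀ i, i ≠ D.h s → D.rho s i < D.rho s (D.h s)) :
    ∀ t, s ≤ t → D.G t = D.G s :=
  G_eq_of_stable hthr fun i j hi hj => by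
    obtain rfl : i = D.l s := by_contra fun hne => (hl i hne).not_ge (hi _)
    obtain rfl : j = D.h s := by_contra fun hne => (hh j hne).not_ge (hj _)
    exact hfalse

section LinkedStep

variable {t : ℕ}

lemma cnt_succ_of_linked_of_ne (hlink : D.G t (D.l t) (D.h t) = true) {i : Fin n}
    (hi : i ≠ D.l t) : D.cnt (t + 1) i = D.cnt t i := by
  have hG := (D.step_old t hlink).1
  rw [cnt, cnt, hG, P_succ_of_ne_l hi fun k => by rw [hG]]

lemma cnt_succ_l_of_linked (hlink : D.G t (D.l t) (D.h t) = true)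
    (hcorrect : ∀ k, D.P t (D.h t) (D.l t) k = D.G t (D.l t) k) :
    D.cnt (t + 1) (D.l t) = D.cnt t (D.h t) := by
  obtain ⟨hG, hcopy⟩ := D.step_old t hlink
  refine agreements_congr fun j k _ => ?_
  by_cases hjk : j = D.l t ∨ k = D.l t
  · refine iff_of_true (P_eq_G_of_mem hjk) ?_
    rcases hjk with rfl | rfl
    · exact hcorrect k
    · rw [D.P_symm, D.G_symm, hcorrect]
  · rw [hcopy j k (not_or.1 hjk).1 (not_or.1 hjk).2, hG]

end LinkedStep

structure BuildUp (D : Dyn n c) (t : ℕ) : Prop where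
  h_succ : ∀ r < t, D.h (r + 1) = D.l r
  l_ne_h0 : ∀ r < t, D.l r ≠ D.h 0
  l_ne_l : ∀ q r, q < r → r < t → D.l r ≠ D.l q
  G_true : ∀ j k, D.G t j k = true →
    ∃ r < t, (j = D.l r ∧ k = D.h r) ∨ (j = D.h r ∧ k = D.l r)
  numLinks_eq : numLinks (D.G t) = t
  P_h0 : ∀ a b, a ≠ D.h 0 → b ≠ D.h 0 → D.P t (D.h 0) a b = D.P 0 (D.h 0) a b
  P_l : ∀ s < t, ∀ a b, (∀ q ≤ s, a ≠ D.l q ∧ b ≠ D.l q) →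
    D.P t (D.l s) a b = D.P 0 (D.h 0) a b
  cnt_h0_lt : 0 < t → D.cnt t (D.h 0) < D.cnt t (D.h t)
  cnt_h0_le : ∀ s, s + 2 ≤ t → D.cnt t (D.h 0) ≤ D.cnt t (D.l s)

variable (D) in
lemma BuildUp.zero : D.BuildUp 0 where
  h_succ _ h := absurd h (Nat.not_lt_zero _)
  l_ne_h0 _ h := absurd h (Nat.not_lt_zero _)
  l_ne_l _ _ _ h := absurd h (Nat.not_lt_zero _)
  G_true j k h := by simp [D.G_init] at h
  numLinks_eq := by simp [numLinks, D.G_init]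
  P_h0 _ _ _ _ := rfl
  P_l _ h := absurd h (Nat.not_lt_zero _)
  cnt_h0_lt h := absurd h (lt_irrefl 0)
  cnt_h0_le _ h := absurd h (by omega)

namespace BuildUp

variable {t : ℕ}

lemma l_ne_l_of_lt (hn : 2 ≤ n) (inv : D.BuildUp t)
    (hl : ∀ i, i ≠ D.l t → D.rho t (D.l t) < D.rho t i) : ∀ q < t, D.l t ≠ D.l q := by
  intro q hq heq
  rcases (by omega : q + 1 = t ∨ q + 2 ≤ t) with rfl | hq2
  · exact l_ne_h hn hl (heq.trans (inv.h_succ q hq).symm)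
  · have hlt := (rho_lt_rho_iff hn).1 (hl _ (heq ▸ (inv.l_ne_h0 q hq).symm))
    have := inv.cnt_h0_le q hq2
    rw [heq] at hlt
    omega

lemma eq_of_G_l (hn : 2 ≤ n) (inv : D.BuildUp t)
    (hl : ∀ i, i ≠ D.l t → D.rho t (D.l t) < D.rho t i) {k : Fin n}
    (hk : D.G t (D.l t) k = true) : 0 < t ∧ D.l t = D.h 0 ∧ k = D.l 0 := by
  obtain ⟨r, hr, ⟨hlr, -⟩ | ⟨hhr, hkr⟩⟩ := inv.G_true _ _ hk
  · exact absurd hlr (inv.l_ne_l_of_lt hn hl r hr)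
  · cases r with
    | zero => exact ⟨hr, hhr, hkr⟩
    | succ r =>
      exact absurd (hhr.trans (inv.h_succ r (by omega))) (inv.l_ne_l_of_lt hn hl r (by omega))

lemma eq_one_of_linked (hn : 2 ≤ n) (inv : D.BuildUp t)
    (hl : ∀ i, i ≠ D.l t → D.rho t (D.l t) < D.rho t i)
    (hlink : D.G t (D.l t) (D.h t) = true) : t = 1 ∧ D.l 1 = D.h 0 := by
  obtain ⟨ht, hl0, hh⟩ := inv.eq_of_G_l hn hl hlink
  obtain ⟨u, rfl⟩ := Nat.exists_eq_add_of_lt ht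
  rw [zero_add, inv.h_succ u (by omega)] at hh
  obtain rfl : u = 0 := by
    by_contra hu
    exact inv.l_ne_l 0 u (by omega) (by omega) hh
  exact ⟨rfl, hl0⟩

lemma P_l_succ (inv : D.BuildUp t) (hfalse : D.G t (D.l t) (D.h t) = false)
    (hthr : c < D.thr t) (hfresh : ∀ q < t, D.l t ≠ D.l q) :
    ∀ s < t + 1, ∀ a b, (∀ q ≤ s, a ≠ D.l q ∧ b ≠ D.l q) →
      D.P (t + 1) (D.l s) a b = D.P 0 (D.h 0) a b := by
  intro s hs a b hab
  rcases Nat.lt_succ_iff_lt_or_eq.1 hs with hst | rfl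
  · rw [D.keep t _ (hfresh s hst).symm a b (hab s le_rfl).1 (hab s le_rfl).2]
    exact inv.P_l s hst a b hab
  · rw [(D.step_add s hfalse hthr).2 a b (hab s le_rfl).1 (hab s le_rfl).2]
    cases s with
    | zero => rfl
    | succ u =>
      rw [inv.h_succ u (by omega)]
      exact inv.P_l u (by omega) a b fun q hq => hab q (by omega)
lemma cnt_succ_h0_le (inv : D.BuildUp t) (hlh : D.l t ≠ D.h t)
    (hfalse : D.G t (D.l t) (D.h t) = false) (hthr : c < D.thr t) (hl0 : D.l t ≠ D.h 0) :
    D.cnt (t + 1) (D.h 0) ≤ D.cnt t (D.h t) := by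
  cases t with
  | zero => exact (cnt_succ_h_of_add hlh hfalse hthr).le
  | succ u =>
    have hh0 : D.h 0 ≠ D.h (u + 1) := by
      rw [inv.h_succ u (by omega)]
      exact (inv.l_ne_h0 u (by omega)).symm
    have := cnt_succ_le_of_add_of_ne hlh hfalse hthr hl0.symm hh0
    have := inv.cnt_h0_lt (by omega)
    omega

lemma cnt_h0_le_succ (inv : D.BuildUp t) (hlh : D.l t ≠ D.h t)
    (hfalse : D.G t (D.l t) (D.h t) = false) (hthr : c < D.thr t) (hl0 : D.l t ≠ D.h 0)
    (hfresh : ∀ q < t, D.l t ≠ D.l q) :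
    ∀ s, s + 2 ≤ t + 1 → D.cnt (t + 1) (D.h 0) ≤ D.cnt (t + 1) (D.l s) := by
  intro s hs
  obtain ⟨u, rfl⟩ : ∃ u, t = u + 1 := ⟨t - 1, by omega⟩
  have hht : D.h (u + 1) = D.l u := inv.h_succ u (by omega)
  rcases (by omega : s = u ∨ s + 2 ≤ u + 1) with rfl | hs2
  · rw [← hht, cnt_succ_h_of_add hlh hfalse hthr]
    exact inv.cnt_succ_h0_le hlh hfalse hthr hl0
  -- `h 0` and `l s` both still see the new pair as `h 0` did at period 0.
  have hsh : D.l s ≠ D.h (u + 1) := hht ▸ (inv.l_ne_l s u (by omega) (by omega)).symm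
  have hb0 : D.P (u + 1) (D.h 0) (D.l (u + 1)) (D.h (u + 1)) =
      D.P 0 (D.h 0) (D.l (u + 1)) (D.h (u + 1)) :=
    inv.P_h0 _ _ hl0 (hht ▸ inv.l_ne_h0 u (by omega))
  have hbs : D.P (u + 1) (D.l s) (D.l (u + 1)) (D.h (u + 1)) =
      D.P 0 (D.h 0) (D.l (u + 1)) (D.h (u + 1)) :=
    inv.P_l s (by omega) _ _ fun q hq =>
      ⟨hfresh q (by omega), hht ▸ inv.l_ne_l q u (by omega) (by omega)⟩
  have e0 := cnt_succ_of_add_of_ne hlh hfalse hthr hl0.symm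
    (hht ▸ (inv.l_ne_h0 u (by omega)).symm)
  have es := cnt_succ_of_add_of_ne hlh hfalse hthr (hfresh s (by omega)).symm hsh
  have := inv.cnt_h0_le s hs2
  rw [hb0] at e0
  rw [hbs] at es
  split_ifs at e0 es <;> omega

lemma succ (hn : 2 ≤ n) (inv : D.BuildUp t)
    (hl : ∀ i, i ≠ D.l t → D.rho t (D.l t) < D.rho t i)
    (hh : ∀ i, i ≠ D.h (t + 1) → D.rho (t + 1) i < D.rho (t + 1) (D.h (t + 1)))
    (hl0 : D.l t ≠ D.h 0) (hthr : c < D.thr t)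
    (hmis : ∃ k, k ≠ D.l t ∧ k ≠ D.h t ∧ D.P t (D.h t) (D.l t) k ≠ D.G t (D.l t) k) :
    D.BuildUp (t + 1) := by
  have hlh := l_ne_h hn hl
  have hfresh := inv.l_ne_l_of_lt hn hl
  have hfalse : D.G t (D.l t) (D.h t) = false := by
    cases hG : D.G t (D.l t) (D.h t)
    · rfl
    · exact absurd (inv.eq_of_G_l hn hl hG).2.1 hl0
  have hnext := h_succ_of_add hn hlh hfalse hthr hmis hh
  refine ⟨fun r hr => ?_, fun r hr => ?_, fun q r hqr hr => ?_, fun j k hjk => ?_, ?_,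
    fun a b ha hb => ?_, inv.P_l_succ hfalse hthr hfresh, fun _ => ?_,
    inv.cnt_h0_le_succ hlh hfalse hthr hl0 hfresh⟩
  · rcases Nat.lt_succ_iff_lt_or_eq.1 hr with hr | rfl
    exacts [inv.h_succ r hr, hnext]
  · rcases Nat.lt_succ_iff_lt_or_eq.1 hr with hr | rfl
    exacts [inv.l_ne_h0 r hr, hl0]
  · rcases Nat.lt_succ_iff_lt_or_eq.1 hr with hr | rfl
    exacts [inv.l_ne_l q r hqr hr, hfresh q hqr]
  · rcases ((D.step_add t hfalse hthr).1 j k).1 hjk with hG | hnew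
    · obtain ⟨r, hr, h⟩ := inv.G_true j k hG
      exact ⟨r, by omega, h⟩
    · exact ⟨t, by omega, hnew⟩
  · rw [numLinks_succ_of_add hlh hfalse hthr, inv.numLinks_eq]
  · rw [D.keep t _ hl0.symm a b ha hb]
    exact inv.P_h0 a b ha hb
  · have := inv.cnt_succ_h0_le hlh hfalse hthr hl0
    have := cnt_succ_h_of_add hlh hfalse hthr
    have := cnt_succ_h_lt_cnt_succ_l hlh hfalse hthr hmis
    rw [hnext]
    omega

end BuildUp

lemma buildUp (hn : 2 ≤ n) {tbar : ℕ} (hthr : ∀ s, s < tbar → c < D.thr s)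
    (huniq : ∀ t, t ≤ tbar →
      (∀ i, i ≠ D.l t → D.rho t (D.l t) < D.rho t i) ∧
      (∀ i, i ≠ D.h t → D.rho t i < D.rho t (D.h t)))
    (hl0 : ∀ t, t < tbar → D.l t ≠ D.h 0)
    (hmis : ∀ t, t < tbar → ∃ k, k ≠ D.l t ∧ k ≠ D.h t ∧
      D.P t (D.h t) (D.l t) k ≠ D.G t (D.l t) k) :
    ∀ t, t ≤ tbar → D.BuildUp t := by
  intro t
  induction t with
  | zero => exact fun _ => BuildUp.zero D
  | succ t ih =>
    intro ht
    exact (ih (by omega)).succ hn (huniq t (by omega)).1 (huniq (t + 1) ht).2 (hl0 t ht)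
      (hthr t ht) (hmis t ht)

lemma BuildUp.eq_or_eq_of_G_one (inv : D.BuildUp 1) {i k : Fin n} (hik : D.G 1 i k = true) :
    i = D.l 0 ∨ i = D.h 0 := by
  obtain ⟨r, hr, h | h⟩ := inv.G_true i k hik <;> obtain rfl : r = 0 := by omega
  exacts [Or.inl h.1, Or.inr h.1]

lemma BuildUp.P_h_l_one (inv : D.BuildUp 1) (hl1 : D.l 1 = D.h 0) (k : Fin n) :
    D.P 1 (D.h 1) (D.l 1) k = D.G 1 (D.l 1) k := by
  have hl0 : D.l 0 ≠ D.h 0 := inv.l_ne_h0 0 one_pos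
  rw [inv.h_succ 0 one_pos, hl1]
  by_cases hk : k = D.l 0
  · exact P_eq_G_of_mem (Or.inr hk)
  have hG : D.G 1 (D.h 0) k = false := by
    rw [D.G_symm]
    cases hG : D.G 1 k (D.h 0)
    · rfl
    · rcases inv.eq_or_eq_of_G_one hG with rfl | rfl
      exacts [absurd rfl hk, by simp [D.G_irrefl] at hG]
  rw [inv.P_l 0 one_pos _ _ fun q hq => ?_, P_eq_G_of_mem (Or.inl rfl), D.G_init, hG]
  obtain rfl : q = 0 := by omega
  exact ⟨hl0.symm, hk⟩

lemma G_eq_of_swap (hn : 3 ≤ n) (inv : D.BuildUp 1) (hl1 : D.l 1 = D.h 0)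
    (hlink : D.G 1 (D.l 1) (D.h 1) = true) (hthr : D.thr 1 ≤ c)
    (hh : ∀ i, i ≠ D.h 1 → D.rho 1 i < D.rho 1 (D.h 1)) :
    ∀ t, 1 ≤ t → D.G t = D.G 1 := by
  have hn2 : 2 ≤ n := by omega
  have hh1 : D.h 1 = D.l 0 := inv.h_succ 0 one_pos
  have hG2 : D.G 2 = D.G 1 := (D.step_old 1 hlink).1
  have hcnt : ∀ i, i ≠ D.h 0 → D.cnt 2 i = D.cnt 1 i := fun i hi =>
    cnt_succ_of_linked_of_ne hlink (hl1 ▸ hi)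
  have hcnt_h0 : D.cnt 2 (D.h 0) = D.cnt 1 (D.h 1) :=
    hl1 ▸ cnt_succ_l_of_linked hlink (inv.P_h_l_one hl1)
  have hlt : ∀ i, i ≠ D.l 0 → i ≠ D.h 0 → D.cnt 2 i < D.cnt 1 (D.h 1) := fun i hi0 hi1 =>
    hcnt i hi1 ▸ (rho_lt_rho_iff hn2).1 (hh i (hh1 ▸ hi0))
  have hle : ∀ i, D.cnt 2 i ≤ D.cnt 1 (D.h 1) := by
    intro i
    by_cases hi : i = D.h 0
    · rw [hi, hcnt_h0]
    · rw [hcnt i hi]; exact D.cnt_le_h hn2 1 i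
  have hge : ∀ i, D.cnt 1 (D.l 1) ≤ D.cnt 2 i := by
    intro i
    by_cases hi : i = D.h 0
    · rw [hi, hcnt_h0]; exact D.cnt_l_le hn2 1 _
    · rw [hcnt i hi]; exact D.cnt_l_le hn2 1 i
  have hcnt_l0 : D.cnt 2 (D.l 0) = D.cnt 1 (D.h 1) := by
    rw [hcnt _ (inv.l_ne_h0 0 one_pos), hh1]
  obtain ⟨w, hw0, hw1⟩ := Fin.exists_ne_and_ne_of_two_lt (D.l 0) (D.h 0) hn
  have hthr2 : D.thr 2 ≤ c := (thr_le_thr hn2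
    (le_antisymm (hle _) (hcnt_l0 ▸ D.cnt_le_h hn2 2 (D.l 0))) (hge _)).trans hthr
  -- `w` ranks below `l 0` and `h 0`, so a least accurate agent is not an end of the only link.
  have hstable := G_eq_of_stable hthr2 fun i j hi _ => by
    have hiw := (rho_le_rho_iff hn2).1 (hi w)
    have hw := hlt w hw0 hw1
    rw [hG2]
    cases hG : D.G 1 i j
    · rfl
    · rcases inv.eq_or_eq_of_G_one hG with rfl | rfl <;> omega
  intro t ht
  rcases (by omega : t = 1 ∨ 2 ≤ t) with rfl | ht2
  · rfl
  · rw [hstable t ht2, hG2]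

end Dyn

theorem stmt12_general (n : ℕ) (hn : 3 ≤ n) (c : ℝ) (D : Dyn n c)
    (tbar : ℕ) (htb1 : D.thr tbar ≤ c) (htb2 : ∀ s, s < tbar → c < D.thr s)
    (htbn : tbar ≤ n - 1)
    (huniq : ∀ t, t ≤ tbar →
      (∀ i, i ≠ D.l t → D.rho t (D.l t) < D.rho t i) ∧
      (∀ i, i ≠ D.h t → D.rho t i < D.rho t (D.h t)))
    (hlh0 : ∀ t, t < min tbar (n - 1) → D.l t ≠ D.h 0)
    (hmis : ∀ t, t < tbar → ∃ k, k ≠ D.l t ∧ k ≠ D.h t ∧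
      D.P t (D.h t) (D.l t) k ≠ D.G t (D.l t) k) :
    (∀ t, t < tbar → Dyn.numLinks (D.G (t + 1)) = Dyn.numLinks (D.G t) + 1) ∧
    (∀ s, tbar ≤ s → D.G s = D.G tbar) ∧
    Dyn.numLinks (D.G tbar) = tbar := by
  have inv := D.buildUp (by omega) htb2 huniq (fun t ht => hlh0 t (lt_min ht (by omega))) hmis
  refine ⟨fun t ht => ?_, ?_, (inv tbar le_rfl).numLinks_eq⟩
  · rw [(inv (t + 1) ht).numLinks_eq, (inv t ht.le).numLinks_eq]
  cases hlink : D.G tbar (D.l tbar) (D.h tbar)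
  · exact D.G_eq_of_unique htb1 hlink (huniq tbar le_rfl).1 (huniq tbar le_rfl).2
  · obtain ⟨rfl, hl1⟩ := (inv tbar le_rfl).eq_one_of_linked (by omega) (huniq tbar le_rfl).1 hlink
    exact D.G_eq_of_swap hn (inv 1 le_rfl) hl1 hlink htb1 (huniq 1 le_rfl).2

/-- Proposition 3, part 2: with `0 ≤ c < c₀`, if `t̄ ≤ n−1` is the least period with
`c_{t̄} ≤ c`, and along the way minimizers/maximizers are unique, `l_t ≠ h_0` for
`t < min(t̄, n−1)`, and the chosen most accurate agent misperceives some link state of the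
updater with a third party, then exactly one link is added at each period `t < t̄`, the
network never changes from period `t̄` on, and the steady-state network has exactly `t̄`
links. -/
theorem stmt12 (n : ℕ) (hn : 3 ≤ n) (c : ℝ) (hc0 : 0 ≤ c) (D : Dyn n c)
    (hclt : c < 2 / (n : ℝ) + (1 - 2 / (n : ℝ)) *
        ((Finset.univ : Finset (Fin n)).sup'
          ⟨⟨0, Nat.lt_of_lt_of_le (Nat.succ_pos 2) hn⟩, Finset.mem_univ _⟩
          fun i => D.rho 0 i)
      - ((Finset.univ : Finset (Fin n)).inf'
          ⟨⟨0, Nat.lt_of_lt_of_le (Nat.succ_pos 2) hn⟩, Finset.mem_univ _⟩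
          fun i => D.rho 0 i))
    (tbar : ℕ) (htb1 : D.thr tbar ≤ c) (htb2 : ∀ s, s < tbar → c < D.thr s)
    (htbn : tbar ≤ n - 1)
    (huniq : ∀ t, t ≤ tbar →
      (∀ i, i ≠ D.l t → D.rho t (D.l t) < D.rho t i) ∧
      (∀ i, i ≠ D.h t → D.rho t i < D.rho t (D.h t)))
    (hlh0 : ∀ t, t < min tbar (n - 1) → D.l t ≠ D.h 0)
    (hmis : ∀ t, t < tbar → ∃ k, k ≠ D.l t ∧ k ≠ D.h t ∧
      D.P t (D.h t) (D.l t) k ≠ D.G t (D.l t) k) :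
    (∀ t, t < tbar → Dyn.numLinks (D.G (t + 1)) = Dyn.numLinks (D.G t) + 1) ∧
    (∀ s, tbar ≤ s → D.G s = D.G tbar) ∧
    Dyn.numLinks (D.G tbar) = tbar :=
  stmt12_general n hn c D tbar htb1 htb2 htbn huniq hlh0 hmis
end

section
/- (Link concentration mechanism.) Let G be a network and i, j, h three distinct agents with G(i,h) = G(j,h) = 0. Suppose agent h's perception is fully correct, P^h = G, and suppose the perception P^k of every other agent k ∉ {h} satisfies P^k(k,m) = G(k,m) for all m and P^k(i,h) = P^k(j,h) = 0. Let G' be G with both links {i,h} and {j,h} added. Let the updated perceptions be: P'^i(a,b) = P^h(a,b) for a,b ≠ i and P'^i(i,m) = G'(i,m); symmetrically P'^j(a,b) = P^h(a,b) for a,b ≠ j and P'^j(j,m) = G'(j,m); P'^h equals P^h except P'^h(h,m) = G'(h,m) for all m; and every other agent k keeps P^k except P'^k(k,m) = G'(k,m) for all m. Then ρ(G',P'^h) = 1, ρ(G',P'^i) = ρ(G',P'^j) = 1 − 1/M (each of i and j misperceiving exactly the other's new link to h), and ρ(G',P'^k) = ρ(G,P^k) − 2/M ≤ 1 − 2/M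 for every k ∉ {i,j,h}; in particular h is the unique most accurate agent in the new state. -/
/-!
Accuracy is one minus the fraction of misperceived pairs `a < b`, and such pairs correspond
bijectively to the off-diagonal elements of `Sym2`, so everything reduces to locating the
misperceived links. An agent who rewrites her own row to `G'` and keeps a perception `Q`
elsewhere errs exactly on the links avoiding her on which `Q` errs. As `G'` differs from `G`
exactly on the two new links through `h`, the hub `h` errs nowhere, `i` errs only on `{j, h}`
and `j` only on `{i, h}`, and every other agent keeps her old errors and gains both new links,
which she used to perceive correctly.
-/

open Finset

section Pairs

variable {α : Type*} [LinearOrder α] [Fintype α]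

lemma card_filter_lt_and_mk_mem (S : Finset (Sym2 α)) (hS : ∀ z ∈ S, ¬z.IsDiag) :
    #{p : α × α | p.1 < p.2 ∧ s(p.1, p.2) ∈ S} = #S := by
  refine card_bij (fun p _ => s(p.1, p.2)) (fun p hp => (mem_filter.mp hp).2.2) ?_ ?_
  · rintro ⟨a, b⟩ hab ⟨c, d⟩ hcd e
    simp only [mem_filter, mem_univ, true_and] at hab hcd
    rcases Sym2.eq_iff.mp e with ⟨rfl, rfl⟩ | ⟨rfl, rfl⟩
    · rfl
    · exact absurd hab.1 hcd.1.not_gt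
  · intro z hz
    induction z using Sym2.ind with
    | _ a b =>
      have hab : a ≠ b := fun e => hS _ hz (Sym2.mk_isDiag_iff.mpr e)
      refine ⟨(min a b, max a b), ?_, ?_⟩
      · simp only [mem_filter, mem_univ, true_and, min_lt_max]
        refine ⟨hab, ?_⟩
        rcases le_total a b with h | h
        · simpa [h] using hz
        · simpa [h, Sym2.eq_swap] using hz
      · rcases le_total a b with h | h
        · simp [h]
        · simp [h, Sym2.eq_swap]

lemma card_filter_lt : #{p : α × α | p.1 < p.2} = (Fintype.card α).choose 2 := by
  rw [← Sym2.card_subtype_not_diag, Fintype.card_subtype,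
    ← card_filter_lt_and_mk_mem _ fun z hz => (mem_filter.mp hz).2]
  congr 1
  ext p
  simp only [mem_filter, mem_univ, true_and, Sym2.mk_isDiag_iff, iff_self_and]
  exact fun h => h.ne

end Pairs

section Accuracy

variable {n : ℕ}

lemma mul_sub_one_div_two_pos (hn : 2 ≤ n) : (0 : ℝ) < (n : ℝ) * ((n : ℝ) - 1) / 2 := by
  have : (2 : ℝ) ≤ n := by exact_mod_cast hn
  nlinarith

def misperceived (G P : Fin n → Fin n → Bool) : Finset (Fin n × Fin n) :=
  {p | p.1 < p.2 ∧ P p.1 p.2 ≠ G p.1 p.2}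

lemma acc_eq_one_sub (hn : 2 ≤ n) (G P : Fin n → Fin n → Bool) :
    acc n G P = 1 - #(misperceived G P) / ((n : ℝ) * ((n : ℝ) - 1) / 2) := by
  have hcard : #{p : Fin n × Fin n | p.1 < p.2 ∧ P p.1 p.2 = G p.1 p.2}
      + #(misperceived G P) = #{p : Fin n × Fin n | p.1 < p.2} := by
    rw [misperceived, ← filter_filter, ← filter_filter]
    exact card_filter_add_card_filter_not _
  have hcardℝ := congrArg (Nat.cast : ℕ → ℝ) hcard
  rw [card_filter_lt, Fintype.card_fin, Nat.cast_add, Nat.cast_choose_two] at hcardℝ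
  rw [acc, eq_sub_iff_add_eq, ← add_div, hcardℝ, div_self (mul_sub_one_div_two_pos hn).ne']

lemma acc_le_one (hn : 2 ≤ n) (G P : Fin n → Fin n → Bool) : acc n G P ≤ 1 := by
  rw [acc_eq_one_sub hn, sub_le_self_iff]
  exact div_nonneg (Nat.cast_nonneg _) (mul_sub_one_div_two_pos hn).le

lemma acc_self (hn : 2 ≤ n) (G : Fin n → Fin n → Bool) : acc n G G = 1 := by
  rw [acc_eq_one_sub hn, misperceived]
  simp

lemma acc_eq_of_ne_iff (hn : 2 ≤ n) {G P : Fin n → Fin n → Bool} (S : Finset (Sym2 (Fin n)))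
    (hS : ∀ z ∈ S, ¬z.IsDiag) (hP : ∀ a b, P a b ≠ G a b ↔ s(a, b) ∈ S) :
    acc n G P = 1 - #S / ((n : ℝ) * ((n : ℝ) - 1) / 2) := by
  rw [acc_eq_one_sub hn, ← card_filter_lt_and_mk_mem S hS, misperceived]
  simp only [hP]

lemma acc_eq_sub_of_ne_iff (hn : 2 ≤ n) {G G' P P' : Fin n → Fin n → Bool}
    (S : Finset (Sym2 (Fin n))) (hS : ∀ z ∈ S, ¬z.IsDiag)
    (hP' : ∀ a b, P' a b ≠ G' a b ↔ P a b ≠ G a b ∨ s(a, b) ∈ S)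
    (hPS : ∀ a b, s(a, b) ∈ S → P a b = G a b) :
    acc n G' P' = acc n G P - #S / ((n : ℝ) * ((n : ℝ) - 1) / 2) := by
  have hsplit : misperceived G' P' =
      misperceived G P ∪ ({p : Fin n × Fin n | p.1 < p.2 ∧ s(p.1, p.2) ∈ S} : Finset _) := by
    rw [misperceived, misperceived, ← filter_or]
    simp only [hP', and_or_left]
  have hdisj : Disjoint (misperceived G P)
      ({p : Fin n × Fin n | p.1 < p.2 ∧ s(p.1, p.2) ∈ S} : Finset _) :=
    disjoint_filter.mpr fun p _ hP hS => hP.2 (hPS _ _ hS.2)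
  rw [acc_eq_one_sub hn, acc_eq_one_sub hn, hsplit, card_union_of_disjoint hdisj,
    card_filter_lt_and_mk_mem S hS, Nat.cast_add]
  ring

end Accuracy

section Perception

variable {α : Type*} {G G' P Q : α → α → Bool}

lemma apply_eq_of_mk_eq_mk (hG : ∀ a b, G a b = G b a) {a b c d : α} (e : s(a, b) = s(c, d)) :
    G a b = G c d := by
  rcases Sym2.eq_iff.mp e with ⟨rfl, rfl⟩ | ⟨rfl, rfl⟩
  · rfl
  · exact hG _ _

lemma ne_iff_of_row_eq (hP : ∀ a b, P a b = P b a) (hG : ∀ a b, G a b = G b a) {k : α}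
    (hown : ∀ m, P k m = G k m) (hoff : ∀ a b, a ≠ k → b ≠ k → P a b = Q a b) (a b : α) :
    P a b ≠ G a b ↔ k ∉ s(a, b) ∧ Q a b ≠ G a b := by
  by_cases ha : a = k
  · subst ha; simp [hown]
  by_cases hb : b = k
  · subst hb; simp [hP a, hG a, hown]
  · simp [Sym2.mem_iff, hoff a b ha hb, Ne.symm ha, Ne.symm hb]

variable [DecidableEq α] {i j h : α}

def newLinks (i j h : α) : Finset (Sym2 α) := {s(i, h), s(j, h)}

lemma newLinks_comm : newLinks i j h = newLinks j i h := pair_comm _ _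

lemma card_newLinks (hij : i ≠ j) : #(newLinks i j h) = 2 :=
  card_pair fun e => hij <| by
    rcases Sym2.eq_iff.mp e with ⟨e, -⟩ | ⟨e₁, e₂⟩
    exacts [e, e₁.trans e₂]

lemma not_isDiag_of_mem_newLinks (hih : i ≠ h) (hjh : j ≠ h) :
    ∀ z ∈ newLinks i j h, ¬z.IsDiag := by
  simp [newLinks, hih, hjh]

lemma mem_of_mem_newLinks {z : Sym2 α} (hz : z ∈ newLinks i j h) : h ∈ z := by
  simp only [newLinks, mem_insert, mem_singleton] at hz
  rcases hz with rfl | rfl <;> exact Sym2.mem_mk_right _ _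

lemma not_mem_of_mem_newLinks {k : α} (hki : k ≠ i) (hkj : k ≠ j) (hkh : k ≠ h) {z : Sym2 α}
    (hz : z ∈ newLinks i j h) : k ∉ z := by
  simp only [newLinks, mem_insert, mem_singleton] at hz
  rcases hz with rfl | rfl <;> simp [*]

lemma not_mem_and_mem_newLinks_iff (hij : i ≠ j) (hih : i ≠ h) (z : Sym2 α) :
    i ∉ z ∧ z ∈ newLinks i j h ↔ z = s(j, h) := by
  simp only [newLinks, mem_insert, mem_singleton]
  constructor
  · rintro ⟨hi, rfl | rfl⟩
    · exact absurd (Sym2.mem_mk_left i h) hi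
    · rfl
  · rintro rfl
    simp [hij, hih]

lemma ne_iff_mem_newLinks (hG : ∀ a b, G a b = G b a) (hGih : G i h = false)
    (hGjh : G j h = false)
    (hG' : ∀ a b, G' a b = true ↔
      (G a b = true ∨ (a = i ∧ b = h) ∨ (a = h ∧ b = i) ∨ (a = j ∧ b = h) ∨ (a = h ∧ b = j)))
    (a b : α) : G' a b ≠ G a b ↔ s(a, b) ∈ newLinks i j h := by
  have hmem : s(a, b) ∈ newLinks i j h ↔
      (a = i ∧ b = h) ∨ (a = h ∧ b = i) ∨ (a = j ∧ b = h) ∨ (a = h ∧ b = j) := by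
    simp only [newLinks, mem_insert, mem_singleton, Sym2.eq_iff, or_assoc]
  by_cases hs : s(a, b) ∈ newLinks i j h
  · have hGab : G a b = false := by
      simp only [newLinks, mem_insert, mem_singleton] at hs
      rcases hs with e | e <;> rw [apply_eq_of_mk_eq_mk hG e] <;> assumption
    have hG'ab : G' a b = true := (hG' a b).mpr (Or.inr (hmem.mp hs))
    simp [hs, hGab, hG'ab]
  · have : G' a b = G a b := Bool.eq_iff_iff.mpr ((hG' a b).trans (or_iff_left (mt hmem.mpr hs)))
    simp [hs, this]

end Perception

section Mechanism

variable {n : ℕ} {i j h : Fin n} {G G' P P' : Fin n → Fin n → Bool}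

lemma eq_of_hub_row_eq (hP'sym : ∀ a b, P' a b = P' b a) (hG'sym : ∀ a b, G' a b = G' b a)
    (hdiff : ∀ a b, G' a b ≠ G a b ↔ s(a, b) ∈ newLinks i j h)
    (hown : ∀ m, P' h m = G' h m) (hoff : ∀ a b, a ≠ h → b ≠ h → P' a b = G a b) :
    P' = G' := by
  funext a b
  by_contra hne
  obtain ⟨hh, hab⟩ := (ne_iff_of_row_eq hP'sym hG'sym hown hoff a b).mp hne
  exact hh (mem_of_mem_newLinks ((hdiff a b).mp (Ne.symm hab)))

lemma acc_eq_of_spoke_row_eq (hn : 2 ≤ n) (hij : i ≠ j) (hih : i ≠ h) (hjh : j ≠ h)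
    (hP'sym : ∀ a b, P' a b = P' b a) (hG'sym : ∀ a b, G' a b = G' b a)
    (hdiff : ∀ a b, G' a b ≠ G a b ↔ s(a, b) ∈ newLinks i j h)
    (hown : ∀ m, P' i m = G' i m) (hoff : ∀ a b, a ≠ i → b ≠ i → P' a b = G a b) :
    acc n G' P' = 1 - 1 / ((n : ℝ) * ((n : ℝ) - 1) / 2) := by
  have hP' : ∀ a b, P' a b ≠ G' a b ↔ s(a, b) ∈ ({s(j, h)} : Finset _) := fun a b => by
    rw [ne_iff_of_row_eq hP'sym hG'sym hown hoff, ne_comm, hdiff,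
      not_mem_and_mem_newLinks_iff hij hih, mem_singleton]
  rw [acc_eq_of_ne_iff hn _ (by simpa using hjh) hP', card_singleton, Nat.cast_one]

lemma acc_eq_of_bystander_row_eq (hn : 2 ≤ n) {k : Fin n} (hki : k ≠ i) (hkj : k ≠ j) (hkh : k ≠ h)
    (hij : i ≠ j) (hih : i ≠ h) (hjh : j ≠ h)
    (hPsym : ∀ a b, P a b = P b a) (hGsym : ∀ a b, G a b = G b a)
    (hP'sym : ∀ a b, P' a b = P' b a) (hG'sym : ∀ a b, G' a b = G' b a)
    (hdiff : ∀ a b, G' a b ≠ G a b ↔ s(a, b) ∈ newLinks i j h)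
    (hown : ∀ m, P k m = G k m) (hPih : P i h = G i h) (hPjh : P j h = G j h)
    (hown' : ∀ m, P' k m = G' k m) (hoff' : ∀ a b, a ≠ k → b ≠ k → P' a b = P a b) :
    acc n G' P' = acc n G P - 2 / ((n : ℝ) * ((n : ℝ) - 1) / 2) := by
  have hPS : ∀ a b, s(a, b) ∈ newLinks i j h → P a b = G a b := by
    intro a b hs
    simp only [newLinks, mem_insert, mem_singleton] at hs
    rcases hs with e | e <;>
      rwa [apply_eq_of_mk_eq_mk hPsym e, apply_eq_of_mk_eq_mk hGsym e]
  have hP' : ∀ a b, P' a b ≠ G' a b ↔ P a b ≠ G a b ∨ s(a, b) ∈ newLinks i j h := by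
    intro a b
    rw [ne_iff_of_row_eq hP'sym hG'sym hown' hoff',
      ne_iff_of_row_eq hPsym hGsym hown (fun _ _ _ _ => rfl)]
    by_cases hs : s(a, b) ∈ newLinks i j h
    · have := (hdiff a b).mpr hs
      simp [hs, not_mem_of_mem_newLinks hki hkj hkh hs, hPS a b hs, Ne.symm this]
    · simp [hs, not_not.mp (mt (hdiff a b).mp hs)]
  rw [acc_eq_sub_of_ne_iff hn _ (not_isDiag_of_mem_newLinks hih hjh) hP' hPS,
    card_newLinks hij, Nat.cast_ofNat]

end Mechanism

theorem stmt16_general (n : ℕ) (hn : 4 ≤ n) (i j h : Fin n)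
    (hij : i ≠ j) (hih : i ≠ h) (hjh : j ≠ h)
    (G G' : Fin n → Fin n → Bool)
    (hGsym : ∀ a b, G a b = G b a)
    (hG'sym : ∀ a b, G' a b = G' b a)
    (hGih : G i h = false) (hGjh : G j h = false)
    (hG' : ∀ a b, G' a b = true ↔
      (G a b = true ∨ (a = i ∧ b = h) ∨ (a = h ∧ b = i) ∨ (a = j ∧ b = h) ∨ (a = h ∧ b = j)))
    (P P' : Fin n → Fin n → Fin n → Bool)
    (hPsym : ∀ k a b, P k a b = P k b a)
    (hP'sym : ∀ k a b, P' k a b = P' k b a)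
    (hPh : ∀ a b, P h a b = G a b)
    (hPother : ∀ k, k ≠ h → (∀ m, P k k m = G k m) ∧ P k i h = false ∧ P k j h = false)
    (hP'i_off : ∀ a b, a ≠ i → b ≠ i → P' i a b = P h a b)
    (hP'i_own : ∀ m, P' i i m = G' i m)
    (hP'j_off : ∀ a b, a ≠ j → b ≠ j → P' j a b = P h a b)
    (hP'j_own : ∀ m, P' j j m = G' j m)
    (hP'h_off : ∀ a b, a ≠ h → b ≠ h → P' h a b = P h a b)
    (hP'h_own : ∀ m, P' h h m = G' h m)
    (hP'k_off : ∀ k, k ≠ i → k ≠ j → k ≠ h →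
      ∀ a b, a ≠ k → b ≠ k → P' k a b = P k a b)
    (hP'k_own : ∀ k, k ≠ i → k ≠ j → k ≠ h → ∀ m, P' k k m = G' k m) :
    acc n G' (P' h) = 1 ∧
    acc n G' (P' i) = 1 - 1 / ((n : ℝ) * ((n : ℝ) - 1) / 2) ∧
    acc n G' (P' j) = 1 - 1 / ((n : ℝ) * ((n : ℝ) - 1) / 2) ∧
    (∀ k, k ≠ i → k ≠ j → k ≠ h →
      acc n G' (P' k) = acc n G (P k) - 2 / ((n : ℝ) * ((n : ℝ) - 1) / 2) ∧
      acc n G' (P' k) ≤ 1 - 2 / ((n : ℝ) * ((n : ℝ) - 1) / 2)) ∧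
    (∀ k, k ≠ h → acc n G' (P' k) < acc n G' (P' h)) := by
  have hn2 : 2 ≤ n := by omega
  have hM := mul_sub_one_div_two_pos hn2
  have hdiff := ne_iff_mem_newLinks hGsym hGih hGjh hG'
  simp only [hPh] at hP'i_off hP'j_off hP'h_off
  have acc_h : acc n G' (P' h) = 1 := by
    rw [eq_of_hub_row_eq (hP'sym h) hG'sym hdiff hP'h_own hP'h_off, acc_self hn2]
  have acc_i := acc_eq_of_spoke_row_eq hn2 hij hih hjh (hP'sym i) hG'sym hdiff hP'i_own hP'i_off
  have acc_j := acc_eq_of_spoke_row_eq hn2 hij.symm hjh hih (hP'sym j) hG'sym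
    (by simpa only [newLinks_comm] using hdiff) hP'j_own hP'j_off
  have acc_k : ∀ k, k ≠ i → k ≠ j → k ≠ h →
      acc n G' (P' k) = acc n G (P k) - 2 / ((n : ℝ) * ((n : ℝ) - 1) / 2) :=
    fun k hki hkj hkh => acc_eq_of_bystander_row_eq hn2 hki hkj hkh hij hih hjh (hPsym k) hGsym
      (hP'sym k) hG'sym hdiff (hPother k hkh).1 ((hPother k hkh).2.1.trans hGih.symm)
      ((hPother k hkh).2.2.trans hGjh.symm) (hP'k_own k hki hkj hkh) (hP'k_off k hki hkj hkh)
  have acc_k_le : ∀ k, k ≠ i → k ≠ j → k ≠ h →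
      acc n G' (P' k) ≤ 1 - 2 / ((n : ℝ) * ((n : ℝ) - 1) / 2) := fun k hki hkj hkh => by
    linarith [acc_k k hki hkj hkh, acc_le_one hn2 G (P k)]
  refine ⟨acc_h, acc_i, acc_j, fun k hki hkj hkh => ⟨acc_k k hki hkj hkh, acc_k_le k hki hkj hkh⟩,
    fun k hkh => ?_⟩
  have := div_pos one_pos hM
  have := div_pos two_pos hM
  obtain rfl | hki := eq_or_ne k i
  · linarith
  obtain rfl | hkj := eq_or_ne k j
  · linarith
  linarith [acc_k_le k hki hkj hkh]

/-- Link concentration mechanism: `M = n(n−1)/2`; `P k` is agent `k`'s perception before,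
`P' k` after, the two links `{i,h}` and `{j,h}` are added. -/
theorem stmt16 (n : ℕ) (hn : 4 ≤ n) (i j h : Fin n)
    (hij : i ≠ j) (hih : i ≠ h) (hjh : j ≠ h)
    (G G' : Fin n → Fin n → Bool)
    (hGsym : ∀ a b, G a b = G b a) (hGirr : ∀ a, G a a = false)
    (hG'sym : ∀ a b, G' a b = G' b a) (hG'irr : ∀ a, G' a a = false)
    (hGih : G i h = false) (hGjh : G j h = false)
    (hG' : ∀ a b, G' a b = true ↔
      (G a b = true ∨ (a = i ∧ b = h) ∨ (a = h ∧ b = i) ∨ (a = j ∧ b = h) ∨ (a = h ∧ b = j)))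
    (P P' : Fin n → Fin n → Fin n → Bool)
    (hPsym : ∀ k a b, P k a b = P k b a) (hPirr : ∀ k a, P k a a = false)
    (hP'sym : ∀ k a b, P' k a b = P' k b a) (hP'irr : ∀ k a, P' k a a = false)
    (hPh : ∀ a b, P h a b = G a b)
    (hPother : ∀ k, k ≠ h → (∀ m, P k k m = G k m) ∧ P k i h = false ∧ P k j h = false)
    (hP'i_off : ∀ a b, a ≠ i → b ≠ i → P' i a b = P h a b)
    (hP'i_own : ∀ m, P' i i m = G' i m)
    (hP'j_off : ∀ a b, a ≠ j → b ≠ j → P' j a b = P h a b)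
    (hP'j_own : ∀ m, P' j j m = G' j m)
    (hP'h_off : ∀ a b, a ≠ h → b ≠ h → P' h a b = P h a b)
    (hP'h_own : ∀ m, P' h h m = G' h m)
    (hP'k_off : ∀ k, k ≠ i → k ≠ j → k ≠ h →
      ∀ a b, a ≠ k → b ≠ k → P' k a b = P k a b)
    (hP'k_own : ∀ k, k ≠ i → k ≠ j → k ≠ h → ∀ m, P' k k m = G' k m) :
    acc n G' (P' h) = 1 ∧
    acc n G' (P' i) = 1 - 1 / ((n : ℝ) * ((n : ℝ) - 1) / 2) ∧
    acc n G' (P' j) = 1 - 1 / ((n : ℝ) * ((n : ℝ) - 1) / 2) ∧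
    (∀ k, k ≠ i → k ≠ j → k ≠ h →
      acc n G' (P' k) = acc n G (P k) - 2 / ((n : ℝ) * ((n : ℝ) - 1) / 2) ∧
      acc n G' (P' k) ≤ 1 - 2 / ((n : ℝ) * ((n : ℝ) - 1) / 2)) ∧
    (∀ k, k ≠ h → acc n G' (P' k) < acc n G' (P' h)) :=
  stmt16_general n hn i j h hij hih hjh G G' hGsym hG'sym hGih hGjh hG' P P' hPsym hP'sym hPh
    hPother hP'i_off hP'i_own hP'j_off hP'j_own hP'h_off hP'h_own hP'k_off hP'k_own
end
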